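/- Let α, β, N, C be positive reals. Then the infimum, over all integers q ≥ 2 and all ρ ∈ (0,1), of cost*(N,C,q,ρ) = αC + βN·ρ/cap(q,ρ) equals αC. -/

import Mathlib

open Filter
open List

/-- The length-`C` prefix of the cyclically alternating sequence `1,2,…,q,1,2,…,q,…`:
its `i`-th symbol (1-indexed) is `((i-1) mod q) + 1`. -/
def altSeq (q C : ℕ) : List ℕ := (List.range C).map (fun i => i % q + 1)

/-- `M q C L`: the number of distinct length-`L` subsequences of `altSeq q C`. -/
def M (q C L : ℕ) : ℕ :=
  ((altSeq q C).sublists.toFinset.filter (fun s => s.length = L)).card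

/-- `cap q ρ = limsup_{C→∞} log₂ M_q(C, ⌊ρC⌋) / C`. -/
noncomputable def cap (q : ℕ) (ρ : ℝ) : ℝ :=
  Filter.atTop.limsup (fun C : ℕ => Real.logb 2 (M q C ⌊ρ * C⌋₊) / C)

/-- The optimal achievable cost $\mathsf{cost}^*(N,C,q,\rho) = \alpha C + \beta N \rho/\mathsf{cap}(q,\rho)$. -/
noncomputable def cost (α β N C : ℝ) (q : ℕ) (ρ : ℝ) : ℝ :=
  α * C + β * N * (ρ / cap q ρ)

lemma altSeq_mono (q : ℕ) {C1 C2 : ℕ} (h : C1 ≤ C2) : altSeq q C1 <+ altSeq q C2 :=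
  List.Sublist.map _ (List.range_sublist.mpr h)

lemma altSeq_block (q n : ℕ) :
    altSeq q (q * (n+1)) = altSeq q (q * n) ++ (List.range q).map (· + 1) := by
  unfold altSeq
  rw [Nat.mul_succ, List.range_add, List.map_append, List.map_map]
  congr 1
  apply List.map_congr_left
  intro i hi
  rw [List.mem_range] at hi
  simp [Nat.mul_add_mod, Nat.mod_eq_of_lt hi]

lemma sub_of_all {q : ℕ} (s : List (Fin q)) :
    s.map (fun x : Fin q => (x : ℕ) + 1) <+ altSeq q (q * s.length) := by
  induction s using List.reverseRecOn with
  | nil => simp [altSeq]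
  | append_singleton s a ih =>
      rw [List.map_append, List.length_append, List.length_singleton, altSeq_block]
      exact List.Sublist.append ih (by
        simp only [List.map_cons, List.map_nil]
        rw [List.singleton_sublist, List.mem_map]
        exact ⟨(a : ℕ), List.mem_range.mpr a.isLt, rfl⟩)

lemma M_pos {q C L : ℕ} (h : L ≤ C) : 1 ≤ M q C L := by
  refine Finset.card_pos.mpr ⟨(altSeq q C).take L, ?_⟩
  rw [Finset.mem_filter, List.mem_toFinset, List.mem_sublists]
  refine ⟨List.take_sublist _ _, ?_⟩
  rw [List.length_take]
  simp only [altSeq, List.length_map, List.length_range]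
  omega

lemma M_ge {q C L : ℕ} (h : q * L ≤ C) : q ^ L ≤ M q C L := by
  classical
  have hmapinj : Function.Injective (fun x : Fin q => (x : ℕ) + 1) :=
    fun a b hab => Fin.val_injective (by simpa using hab)
  have hinj : Function.Injective (fun f : Fin L → Fin q =>
      (List.ofFn f).map (fun x : Fin q => (x : ℕ) + 1)) :=
    fun f g hfg => List.ofFn_injective (List.map_injective_iff.mpr hmapinj hfg)
  have hmem : ∀ f : Fin L → Fin q,
      (List.ofFn f).map (fun x : Fin q => (x : ℕ) + 1) ∈
        (altSeq q C).sublists.toFinset.filter (fun s => s.length = L) := by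
    intro f
    rw [Finset.mem_filter, List.mem_toFinset, List.mem_sublists]
    constructor
    · have := sub_of_all (List.ofFn f)
      rw [List.length_ofFn] at this
      exact this.trans (altSeq_mono q h)
    · simp
  calc q ^ L = (Finset.univ : Finset (Fin L → Fin q)).card := by
        rw [Finset.card_univ]; simp
    _ ≤ M q C L := Finset.card_le_card_of_injOn _ (fun f _ => hmem f) hinj.injOn

lemma M_le {q C L : ℕ} : M q C L ≤ 2 ^ C := by
  calc M q C L ≤ (altSeq q C).sublists.toFinset.card := Finset.card_filter_le _ _
    _ ≤ (altSeq q C).sublists.length := (altSeq q C).sublists.toFinset_card_le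
    _ = 2 ^ C := by rw [List.length_sublists]; simp [altSeq]

lemma f_le_one (q : ℕ) (ρ : ℝ) (C : ℕ) :
    Real.logb 2 (M q C ⌊ρ * C⌋₊) / C ≤ 1 := by
  rcases Nat.eq_zero_or_pos C with hC | hC
  · simp [hC]
  · have hCpos : (0:ℝ) < C := by exact_mod_cast hC
    rw [div_le_one hCpos]
    have hlogb : Real.logb 2 (M q C ⌊ρ * C⌋₊) ≤ Real.logb 2 ((2:ℝ) ^ C) := by
      rcases Nat.eq_zero_or_pos (M q C ⌊ρ * C⌋₊) with h0 | h0
      · rw [h0]; simp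
        exact Real.logb_nonneg one_lt_two (one_le_pow₀ one_le_two)
      · apply Real.logb_le_logb_of_le one_lt_two (by exact_mod_cast h0)
        exact_mod_cast M_le
    calc Real.logb 2 (M q C ⌊ρ * C⌋₊) ≤ Real.logb 2 ((2:ℝ) ^ C) := hlogb
      _ = C := by rw [Real.logb_pow _ _, Real.logb_self_eq_one one_lt_two]; ring

lemma f_nonneg (q : ℕ) {ρ : ℝ} (hρ : ρ ∈ Set.Ioo (0:ℝ) 1) (C : ℕ) :
    0 ≤ Real.logb 2 (M q C ⌊ρ * C⌋₊) / C := by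
  apply div_nonneg _ (by positivity)
  apply Real.logb_nonneg one_lt_two
  have hle : ⌊ρ * C⌋₊ ≤ C := by
    calc ⌊ρ * C⌋₊ ≤ ⌊(C:ℝ)⌋₊ := Nat.floor_le_floor (by nlinarith [hρ.1.le, hρ.2.le, Nat.cast_nonneg (α := ℝ) C])
      _ = C := Nat.floor_natCast C
  exact_mod_cast M_pos hle

lemma cap_nonneg (q : ℕ) {ρ : ℝ} (hρ : ρ ∈ Set.Ioo (0:ℝ) 1) : 0 ≤ cap q ρ :=
  le_limsup_of_frequently_le (Frequently.of_forall (f_nonneg q hρ))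
    (isBoundedUnder_of ⟨1, f_le_one q ρ⟩)

lemma cap_ge {q : ℕ} (hq : 2 ≤ q) :
    Real.logb 2 q / q ≤ cap q (1 / (q:ℝ)) := by
  have hq0 : (0:ℝ) < q := by positivity
  apply le_limsup_of_frequently_le _ (isBoundedUnder_of ⟨1, f_le_one q _⟩)
  rw [frequently_atTop]
  intro C0
  refine ⟨q * max 1 C0, le_trans (le_max_right 1 C0) ?_, ?_⟩
  · exact Nat.le_mul_of_pos_left _ (by omega)
  · set n := max 1 C0 with hn
    have hn1 : 1 ≤ n := le_max_left 1 C0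
    have hfloor : ⌊(1 / (q:ℝ)) * ((q * n : ℕ) : ℝ)⌋₊ = n := by
      have : (1 / (q:ℝ)) * ((q * n : ℕ) : ℝ) = (n : ℝ) := by
        push_cast
        field_simp
      rw [this, Nat.floor_natCast]
    rw [hfloor]
    have hM : (q:ℝ) ^ n ≤ (M q (q * n) n : ℝ) := by exact_mod_cast M_ge le_rfl
    have hqn : (0:ℝ) < (q*n : ℕ) := by positivity
    rw [le_div_iff₀ hqn]
    have : Real.logb 2 ((q:ℝ) ^ n) ≤ Real.logb 2 (M q (q * n) n) :=
      Real.logb_le_logb_of_le one_lt_two (by positivity) hM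
    calc Real.logb 2 (q:ℝ) / q * ((q*n : ℕ):ℝ) = n * Real.logb 2 q := by
          push_cast; field_simp
      _ = Real.logb 2 ((q:ℝ) ^ n) := (Real.logb_pow _ _ _).symm
      _ ≤ _ := this

theorem stmt19 (α β N C : ℝ) (hα : 0 < α) (hβ : 0 < β) (hN : 0 < N) (hC : 0 < C) :
    sInf {x : ℝ | ∃ q : ℕ, 2 ≤ q ∧ ∃ ρ ∈ Set.Ioo (0 : ℝ) 1, x = cost α β N C q ρ} =
      α * C := by
  set S := {x : ℝ | ∃ q : ℕ, 2 ≤ q ∧ ∃ ρ ∈ Set.Ioo (0 : ℝ) 1, x = cost α β N C q ρ} with hS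
  have hlb : ∀ x ∈ S, α * C ≤ x := by
    rintro x ⟨q, hq, ρ, hρ, rfl⟩
    have h1 : 0 ≤ ρ / cap q ρ := div_nonneg hρ.1.le (cap_nonneg q hρ)
    have : 0 ≤ β * N * (ρ / cap q ρ) := by positivity
    unfold cost
    linarith
  have hne : S.Nonempty := by
    refine ⟨cost α β N C 2 (1/2), 2, le_rfl, 1/2, ⟨by norm_num, by norm_num⟩, rfl⟩
  have hbdd : BddBelow S := ⟨α * C, hlb⟩
  apply _root_.le_antisymm
  · apply le_of_forall_pos_le_add
    intro ε hε
    -- choose q large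
    set q : ℕ := max 2 (⌈(2:ℝ) ^ (β * N / ε)⌉₊ + 1) with hqdef
    have hq2 : 2 ≤ q := le_max_left _ _
    have hq1 : (1:ℝ) < q := by exact_mod_cast lt_of_lt_of_le one_lt_two hq2
    have hq0 : (0:ℝ) < q := lt_trans one_pos hq1
    have hqgt : (2:ℝ) ^ (β * N / ε) < q := by
      have h1 : (2:ℝ) ^ (β * N / ε) ≤ ⌈(2:ℝ) ^ (β * N / ε)⌉₊ := Nat.le_ceil _
      have h2 : (⌈(2:ℝ) ^ (β * N / ε)⌉₊ : ℝ) < (⌈(2:ℝ) ^ (β * N / ε)⌉₊ + 1 : ℕ) := by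
        push_cast; linarith
      have h3 : ((⌈(2:ℝ) ^ (β * N / ε)⌉₊ + 1 : ℕ) : ℝ) ≤ q := by
        exact_mod_cast Nat.cast_le.mpr (le_max_right 2 _)
      linarith
    have hlog : β * N / ε < Real.logb 2 q :=
      (Real.lt_logb_iff_rpow_lt one_lt_two hq0).mpr hqgt
    have hlogpos : 0 < Real.logb 2 q := lt_of_le_of_lt (by positivity) hlog
    -- the point with ρ = 1/q
    have hρmem : (1 / (q:ℝ)) ∈ Set.Ioo (0:ℝ) 1 := by
      constructor
      · positivity
      · rw [div_lt_one hq0]; exact hq1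
    have hcap : Real.logb 2 q / q ≤ cap q (1 / (q:ℝ)) := cap_ge hq2
    have hcappos : 0 < cap q (1 / (q:ℝ)) := lt_of_lt_of_le (by positivity) hcap
    have hratio : (1 / (q:ℝ)) / cap q (1 / (q:ℝ)) ≤ 1 / Real.logb 2 q := by
      rw [div_le_div_iff₀ hcappos hlogpos]
      calc 1 / (q:ℝ) * Real.logb 2 q = Real.logb 2 q / q := by ring
        _ ≤ cap q (1 / (q:ℝ)) := hcap
        _ = 1 * cap q (1 / (q:ℝ)) := (one_mul _).symm
    have hcost : cost α β N C q (1 / (q:ℝ)) ≤ α * C + β * N * (1 / Real.logb 2 q) := by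
      unfold cost
      have := mul_le_mul_of_nonneg_left hratio (by positivity : (0:ℝ) ≤ β * N)
      linarith
    have hεbound : β * N * (1 / Real.logb 2 q) < ε := by
      rw [mul_one_div, div_lt_iff₀ hlogpos]
      calc β * N = (β * N / ε) * ε := by field_simp
        _ < Real.logb 2 q * ε := by
            apply mul_lt_mul_of_pos_right hlog hε
        _ = ε * Real.logb 2 q := by ring
    calc sInf S ≤ cost α β N C q (1 / (q:ℝ)) :=
          csInf_le hbdd ⟨q, hq2, 1 / (q:ℝ), hρmem, rfl⟩
      _ ≤ α * C + β * N * (1 / Real.logb 2 q) := hcost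
      _ ≤ α * C + ε := by linarith
  · exact le_csInf hne hlb
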